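/- Symmetric (PSB) implies non-flatness at infinity. In the abstract symmetrization framework, let X be a Banach space and f ∈ C¹(X) bounded from below such that: (i) f(u^H) ≤ f(u) and ‖u^H‖ = ‖u‖ for all u ∈ S and H ∈ ℋ*; (ii) for every u ∈ X there exists ξ ∈ S with f(ξ) ≤ f(u) and ‖ξ‖ = ‖u‖; (iii) f satisfies the symmetric (PSB) condition: every sequence (u_h) ⊂ X with (f(u_h)) bounded, ‖df(u_h)‖_{X'} → 0 and ‖u_h − u_h*‖_V → 0 is bounded in X. Then liminf_{‖u‖→+∞} f(u) > inf_X f. -/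

import Mathlib

/-!
If `f` were flat at infinity, there would be points `uₙ` with `‖uₙ‖ → ∞` and `f uₙ → inf f`.
Replacing `uₙ` by a competitor in `S` and polarizing it finitely many times brings it `V`-close to
its own symmetrization without changing its norm or increasing `f`. Ekeland's principle then moves
it by a small amount to an almost critical point `wₙ`, which stays almost symmetric because the
symmetrization, a limit of nonexpansive polarizations, is Lipschitz in `V`. The `wₙ` form a
symmetric Palais–Smale sequence escaping to infinity, contradicting (PSB).
-/

open Filter Topology Metric Set

section Ekeland

variable {α : Type*} [MetricSpace α] {f : α → ℝ} {σ : ℝ} {x y : α}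

def ekelandSet (f : α → ℝ) (σ : ℝ) (y : α) : Set α :=
  {x | f x + σ * dist x y ≤ f y}

theorem mem_ekelandSet : x ∈ ekelandSet f σ y ↔ f x + σ * dist x y ≤ f y := Iff.rfl

theorem mem_ekelandSet_self : y ∈ ekelandSet f σ y := by simp [mem_ekelandSet]

theorem ekelandSet_subset (hσ : 0 ≤ σ) (hx : x ∈ ekelandSet f σ y) :
    ekelandSet f σ x ⊆ ekelandSet f σ y := fun z hz => by
  have := mul_le_mul_of_nonneg_left (dist_triangle z x y) hσ
  rw [mem_ekelandSet] at *
  linarith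

theorem le_of_mem_ekelandSet (hσ : 0 ≤ σ) (hx : x ∈ ekelandSet f σ y) : f x ≤ f y := by
  have := mul_nonneg hσ (dist_nonneg (x := x) (y := y))
  rw [mem_ekelandSet] at hx
  linarith

theorem isClosed_ekelandSet (hf : Continuous f) : IsClosed (ekelandSet f σ y) :=
  isClosed_le (by fun_prop) continuous_const

/-- Picking `x` with `f x` within `σ r` of the infimum of `f` over `ekelandSet f σ y` traps
everything that `x` dominates in the ball of radius `r`. -/
theorem exists_ekelandSet_subset_closedBall (hbdd : BddBelow (range f)) (hσ : 0 < σ) (y : α)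
    {r : ℝ} (hr : 0 < r) : ∃ x ∈ ekelandSet f σ y, ekelandSet f σ x ⊆ closedBall x r := by
  obtain ⟨_, ⟨x, hx, rfl⟩, hlt⟩ := exists_lt_of_csInf_lt
    (Set.Nonempty.image f ⟨y, mem_ekelandSet_self⟩)
    (lt_add_of_pos_right (sInf (f '' ekelandSet f σ y)) (mul_pos hσ hr))
  refine ⟨x, hx, fun z hz => ?_⟩
  have hinf_le : sInf (f '' ekelandSet f σ y) ≤ f z :=
    csInf_le (hbdd.mono (image_subset_range _ _)) ⟨z, ekelandSet_subset hσ.le hx hz, rfl⟩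
  rw [mem_ekelandSet] at hz
  exact le_of_mul_le_mul_left (by linarith) hσ

/-- Ekeland's variational principle. -/
theorem exists_forall_le_add_mul_dist [CompleteSpace α] (hf : Continuous f)
    (hbdd : BddBelow (range f)) (hσ : 0 < σ) {ε : ℝ} {v : α} (hv : f v ≤ (⨅ x, f x) + ε) :
    ∃ w, f w ≤ f v ∧ σ * dist w v ≤ ε ∧ ∀ z, f w ≤ f z + σ * dist z w := by
  choose next hnext_mem hnext_sub using fun (y : α) (n : ℕ) =>
    exists_ekelandSet_subset_closedBall hbdd hσ y (Nat.one_div_pos_of_nat (α := ℝ) (n := n))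
  let x : ℕ → α := fun n => Nat.rec v (fun n y => next y n) n
  let s : ℕ → Set α := fun n => ekelandSet f σ (x (n + 1))
  have hs_anti : Antitone s :=
    antitone_nat_of_succ_le fun n => ekelandSet_subset hσ.le (hnext_mem _ _)
  have hs_dist : ∀ n, ∀ a ∈ s n, ∀ b ∈ s n, dist a b ≤ 2 * (1 / (n + 1)) := fun n a ha b hb =>
    (dist_triangle_right a b (x (n + 1))).trans <| by
      linarith [mem_closedBall.1 (hnext_sub (x n) n ha), mem_closedBall.1 (hnext_sub (x n) n hb)]
  have hδ : Tendsto (fun n : ℕ => 2 * (1 / ((n : ℝ) + 1))) atTop (𝓝 0) := by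
    simpa using tendsto_one_div_add_atTop_nhds_zero_nat.const_mul (2 : ℝ)
  obtain ⟨w, hw⟩ : (⋂ n, s n).Nonempty := by
    refine nonempty_iInter_of_nonempty_biInter (fun n => isClosed_ekelandSet hf)
      (fun n => isBounded_closedBall.subset (hnext_sub (x n) n))
      (fun N => ⟨x (N + 1), mem_iInter₂.2 fun n hn => hs_anti hn mem_ekelandSet_self⟩) ?_
    exact squeeze_zero (fun n => diam_nonneg)
      (fun n => diam_le_of_forall_dist_le (by positivity) (hs_dist n)) hδ
  rw [mem_iInter] at hw
  have hwv : w ∈ ekelandSet f σ v := ekelandSet_subset hσ.le (hnext_mem v 0) (hw 0)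
  refine ⟨w, le_of_mem_ekelandSet hσ.le hwv, ?_, fun z => ?_⟩
  · have := ciInf_le hbdd w
    rw [mem_ekelandSet] at hwv
    linarith
  · by_contra! hlt
    -- `z` would lie in every `s n`, whose diameters shrink to zero, so `z = w`.
    have hz : ∀ n, z ∈ s n := fun n => ekelandSet_subset hσ.le (hw n) hlt.le
    have hzw : dist z w = 0 :=
      le_antisymm (ge_of_tendsto' hδ fun n => hs_dist n z (hz n) w (hw n)) dist_nonneg
    rw [hzw, dist_eq_zero.1 hzw] at hlt
    linarith

end Ekeland

section Derivative

variable {E : Type*} [NormedAddCommGroup E] [NormedSpace ℝ E]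

/-- A one-sided version of `HasFDerivAt.le_of_lip'`. -/
theorem HasFDerivAt.norm_le_of_eventually_le_add {f : E → ℝ} {f' : E →L[ℝ] ℝ} {x₀ : E}
    (hf : HasFDerivAt f f' x₀) {C : ℝ} (hC : 0 ≤ C)
    (h : ∀ᶠ x in 𝓝 x₀, f x₀ ≤ f x + C * ‖x - x₀‖) : ‖f'‖ ≤ C := by
  refine le_of_forall_pos_le_add fun ε hε => ContinuousLinearMap.opNorm_le_of_nhds_zero
    (add_nonneg hC hε.le) ?_
  rw [← map_add_left_nhds_zero x₀, eventually_map] at h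
  have hlower : ∀ᶠ y in 𝓝 0, -((C + ε) * ‖y‖) ≤ f' y := by
    filter_upwards [Asymptotics.isLittleO_iff.1 (hasFDerivAt_iff_isLittleO_nhds_zero.1 hf) hε, h]
      with y hy hyC
    rw [add_sub_cancel_left] at hyC
    rw [Real.norm_eq_abs, abs_le] at hy
    linarith [hy.1]
  filter_upwards [hlower, (continuous_neg.tendsto' 0 0 neg_zero).eventually hlower]
    with y hy hy_neg
  rw [map_neg, norm_neg] at hy_neg
  rw [Real.norm_eq_abs, abs_le]
  constructor <;> linarith

theorem exists_norm_sub_le_and_norm_fderiv_le [CompleteSpace E] {f : E → ℝ}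
    (hf : Differentiable ℝ f) (hbdd : BddBelow (range f)) {δ : ℝ} (hδ : 0 < δ) {v : E}
    (hv : f v ≤ (⨅ x, f x) + δ ^ 2) :
    ∃ w, f w ≤ f v ∧ ‖w - v‖ ≤ δ ∧ ‖fderiv ℝ f w‖ ≤ δ := by
  obtain ⟨w, hwv, hdist, hmin⟩ := exists_forall_le_add_mul_dist hf.continuous hbdd hδ hv
  refine ⟨w, hwv, ?_, ?_⟩
  · rw [← dist_eq_norm]
    exact le_of_mul_le_mul_left (by rwa [← sq]) hδ
  · exact (hf w).hasFDerivAt.norm_le_of_eventually_le_add hδ.le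
      (Eventually.of_forall fun z => by simpa only [dist_eq_norm] using hmin z)

end Derivative

theorem List.foldl_mem_of_forall_mem {α β : Type*} {F : α → β → α} {s : Set α}
    (hF : ∀ a ∈ s, ∀ b, F a b ∈ s) (l : List β) {a : α} (ha : a ∈ s) : l.foldl F a ∈ s := by
  induction l generalizing a with
  | nil => exact ha
  | cons b l ih => exact ih (hF a ha b)

theorem List.norm_sub_foldl_le {α β E : Type*} [SeminormedAddCommGroup E] {F : α → β → α}
    {s : Set α} {e : α → E} (hF : ∀ a ∈ s, ∀ b, F a b ∈ s)
    (hFe : ∀ a ∈ s, ∀ a' ∈ s, ∀ b, ‖e (F a b) - e (F a' b)‖ ≤ ‖e a - e a'‖) (l : List β)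
    {a a' : α} (ha : a ∈ s) (ha' : a' ∈ s) :
    ‖e (l.foldl F a) - e (l.foldl F a')‖ ≤ ‖e a - e a'‖ := by
  induction l generalizing a a' with
  | nil => exact le_rfl
  | cons b l ih => exact (ih (hF a ha b) (hF a' ha' b)).trans (hFe a ha a' ha' b)

section Polarization

variable {X V P : Type*} {S : Set X} {pol : X → P → X} {sy : X → X}

theorem norm_sub_sym_le_of_tendsto_foldl [SeminormedAddCommGroup V] {ι : X → V}
    (hpolS : ∀ u ∈ S, ∀ H : P, pol u H ∈ S)
    (hpolContr : ∀ u ∈ S, ∀ v ∈ S, ∀ H : P, ‖ι (pol u H) - ι (pol v H)‖ ≤ ‖ι u - ι v‖)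
    (Hs : ℕ → P)
    (happrox : ∀ u ∈ S, Tendsto (fun m => ι (List.foldl pol u ((List.range m).map Hs)))
      atTop (𝓝 (ι (sy u))))
    {u v : X} (hu : u ∈ S) (hv : v ∈ S) : ‖ι (sy u) - ι (sy v)‖ ≤ ‖ι u - ι v‖ :=
  le_of_tendsto ((happrox u hu).sub (happrox v hv)).norm
    (Eventually.of_forall fun _ => List.norm_sub_foldl_le hpolS hpolContr _ hu hv)

theorem exists_norm_sub_sym_lt [Norm X] [SeminormedAddCommGroup V] {ι : X → V}
    {f : X → ℝ} (hpolS : ∀ u ∈ S, ∀ H : P, pol u H ∈ S)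
    (hsypol : ∀ u ∈ S, ∀ H : P, sy (pol u H) = sy u)
    (hfpol : ∀ u ∈ S, ∀ H : P, f (pol u H) ≤ f u ∧ ‖pol u H‖ = ‖u‖)
    (Hs : ℕ → P)
    (happrox : ∀ u ∈ S, Tendsto (fun m => ι (List.foldl pol u ((List.range m).map Hs)))
      atTop (𝓝 (ι (sy u))))
    {ξ : X} (hξ : ξ ∈ S) {ε : ℝ} (hε : 0 < ε) :
    ∃ v, f v ≤ f ξ ∧ ‖v‖ = ‖ξ‖ ∧ ‖ι v - ι (sy v)‖ < ε := by
  obtain ⟨m, hm⟩ := ((happrox ξ hξ).eventually (ball_mem_nhds _ hε)).exists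
  obtain ⟨-, hf, hnorm, hsy⟩ := List.foldl_mem_of_forall_mem
    (s := {x | x ∈ S ∧ f x ≤ f ξ ∧ ‖x‖ = ‖ξ‖ ∧ sy x = sy ξ})
    (fun x ⟨hx, hfx, hnx, hsyx⟩ H => ⟨hpolS x hx H, (hfpol x hx H).1.trans hfx,
      (hfpol x hx H).2.trans hnx, (hsypol x hx H).trans hsyx⟩)
    ((List.range m).map Hs) ⟨hξ, le_rfl, rfl, rfl⟩
  exact ⟨_, hf, hnorm, by rwa [hsy, ← dist_eq_norm]⟩

end Polarization

theorem exists_le_norm_lt_of_liminf_le {X : Type*} [Norm X] {g : X → ℝ} {m : ℝ}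
    (h : liminf (fun u => (g u : EReal)) (comap (fun u => ‖u‖) atTop) ≤ m) (R : ℝ) {ε : ℝ}
    (hε : 0 < ε) : ∃ u, R ≤ ‖u‖ ∧ g u < m + ε := by
  by_contra! hge
  have hev : ∀ᶠ u in comap (fun u : X => ‖u‖) atTop, ((m + ε : ℝ) : EReal) ≤ g u := by
    filter_upwards [preimage_mem_comap (Ici_mem_atTop R)] with u hu
    exact EReal.coe_le_coe_iff.2 (hge u hu)
  have := EReal.coe_le_coe_iff.1 ((le_liminf_of_le (by isBoundedDefault) hev).trans h)
  linarith

section Symmetrization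

variable {X V : Type*} [NormedAddCommGroup X] [NormedSpace ℝ X] [CompleteSpace X]
  [NormedAddCommGroup V] [NormedSpace ℝ V] {ι : X →L[ℝ] V} {sy : X → X} {f : X → ℝ}

theorem exists_almost_critical_almost_symmetric (hf : Differentiable ℝ f)
    (hbdd : BddBelow (range f)) {C : ℝ} (hC : 0 ≤ C)
    (hsyLip : ∀ u v, ‖ι (sy u) - ι (sy v)‖ ≤ C * ‖ι u - ι v‖)
    (hsymm : ∀ u, ∀ ε > 0, ∃ v, f v ≤ f u ∧ ‖v‖ = ‖u‖ ∧ ‖ι v - ι (sy v)‖ < ε)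
    {δ : ℝ} (hδ : 0 < δ) {u : X} (hu : f u ≤ (⨅ x, f x) + δ ^ 2) :
    ∃ w, f w ≤ f u ∧ ‖u‖ - δ ≤ ‖w‖ ∧ ‖fderiv ℝ f w‖ ≤ δ ∧
      ‖ι w - ι (sy w)‖ ≤ ((1 + C) * ‖ι‖ + 1) * δ := by
  obtain ⟨v, hvu, hvnorm, hvsym⟩ := hsymm u δ hδ
  obtain ⟨w, hwv, hdist, hderiv⟩ :=
    exists_norm_sub_le_and_norm_fderiv_le hf hbdd hδ (hvu.trans hu)
  have hιdist : ‖ι w - ι v‖ ≤ ‖ι‖ * δ := by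
    rw [← map_sub]
    exact ι.le_opNorm_of_le hdist
  refine ⟨w, hwv.trans hvu, ?_, hderiv, ?_⟩
  · linarith [norm_sub_norm_le v w, norm_sub_rev w v]
  · have hsydist : ‖ι (sy v) - ι (sy w)‖ ≤ C * (‖ι‖ * δ) :=
      (hsyLip v w).trans (by rw [norm_sub_rev]; gcongr)
    calc ‖ι w - ι (sy w)‖
        ≤ ‖ι w - ι v‖ + ‖ι v - ι (sy v)‖ + ‖ι (sy v) - ι (sy w)‖ := by
          simpa only [dist_eq_norm] using dist_triangle4 (ι w) (ι v) (ι (sy v)) (ι (sy w))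
      _ ≤ ‖ι‖ * δ + δ + C * (‖ι‖ * δ) := by gcongr
      _ = ((1 + C) * ‖ι‖ + 1) * δ := by ring

theorem exists_tendsto_norm_atTop_of_liminf_le_iInf (hf : Differentiable ℝ f)
    (hbdd : BddBelow (range f)) {C : ℝ} (hC : 0 ≤ C)
    (hsyLip : ∀ u v, ‖ι (sy u) - ι (sy v)‖ ≤ C * ‖ι u - ι v‖)
    (hsymm : ∀ u, ∀ ε > 0, ∃ v, f v ≤ f u ∧ ‖v‖ = ‖u‖ ∧ ‖ι v - ι (sy v)‖ < ε)
    (hflat : liminf (fun u => (f u : EReal)) (comap (fun u => ‖u‖) atTop) ≤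
      ((⨅ x, f x : ℝ) : EReal)) :
    ∃ w : ℕ → X, (∃ M, ∀ n, |f (w n)| ≤ M) ∧
      Tendsto (fun n => ‖fderiv ℝ f (w n)‖) atTop (𝓝 0) ∧
      Tendsto (fun n => ‖ι (w n) - ι (sy (w n))‖) atTop (𝓝 0) ∧
      Tendsto (fun n => ‖w n‖) atTop atTop := by
  set δ : ℕ → ℝ := fun n => 1 / (n + 1)
  have hδ_pos : ∀ n, 0 < δ n := fun n => Nat.one_div_pos_of_nat
  have hδ_le : ∀ n, δ n ≤ 1 := fun n => (div_le_one (by positivity)).2 (by simp)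
  have hδ_lim : Tendsto δ atTop (𝓝 0) := tendsto_one_div_add_atTop_nhds_zero_nat
  choose u hu_norm hu_lt using fun n : ℕ =>
    exists_le_norm_lt_of_liminf_le hflat n (pow_pos (hδ_pos n) 2)
  choose w hwu hw_norm hw_deriv hw_sym using fun n =>
    exists_almost_critical_almost_symmetric hf hbdd hC hsyLip hsymm (hδ_pos n) (hu_lt n).le
  refine ⟨w, ⟨|⨅ x, f x| + 1, fun n => abs_le.2 ⟨?_, ?_⟩⟩,
    squeeze_zero (fun n => norm_nonneg _) hw_deriv hδ_lim,
    squeeze_zero (fun n => norm_nonneg _) hw_sym (by simpa using hδ_lim.const_mul _),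
    tendsto_atTop_mono (fun n => ?_) (tendsto_atTop_add_const_right _ (-1 : ℝ)
      tendsto_natCast_atTop_atTop)⟩
  · linarith [ciInf_le hbdd (w n), neg_abs_le (⨅ x, f x)]
  · linarith [hwu n, hu_lt n, le_abs_self (⨅ x, f x), pow_le_one₀ (n := 2) (hδ_pos n).le (hδ_le n)]
  · linarith [hu_norm n, hw_norm n, hδ_le n]

end Symmetrization

theorem symmetric_PSB_implies_nonflat_at_infinity_general
    {X : Type*} [NormedAddCommGroup X] [NormedSpace ℝ X] [CompleteSpace X]
    {V : Type*} [NormedAddCommGroup V] [NormedSpace ℝ V]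
    (ι : X →L[ℝ] V)
    (S : Set X)
    {P : Type*}
    (pol : X → P → X) (sy : X → X)
    (hpolS : ∀ u ∈ S, ∀ H : P, pol u H ∈ S)
    (hsypol : ∀ u ∈ S, ∀ H : P,
      pol (sy u) H = sy u ∧ sy (pol u H) = sy u ∧ pol (pol u H) H = pol u H)
    (happrox : ∃ Hs : ℕ → P, ∀ u ∈ S,
      Filter.Tendsto (fun m => ι (List.foldl pol u ((List.range m).map Hs)))
        Filter.atTop (nhds (ι (sy u))))
    (hpolContr : ∀ u ∈ S, ∀ v ∈ S, ∀ H : P, ‖ι (pol u H) - ι (pol v H)‖ ≤ ‖ι u - ι v‖)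
    (Θ : X → X) (CΘ : ℝ) (hCΘ : 0 < CΘ)
    (hΘS : ∀ u : X, Θ u ∈ S)
    (hΘlip : ∀ u v : X, ‖ι (Θ u) - ι (Θ v)‖ ≤ CΘ * ‖ι u - ι v‖)
    (hsyext : ∀ u : X, sy u = sy (Θ u))
    (f : X → ℝ) (hf : ContDiff ℝ 1 f) (hfbdd : BddBelow (Set.range f))
    (hfpol : ∀ u ∈ S, ∀ H : P, f (pol u H) ≤ f u ∧ ‖pol u H‖ = ‖u‖)
    (hfS : ∀ u : X, ∃ ξ ∈ S, f ξ ≤ f u ∧ ‖ξ‖ = ‖u‖)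
    (hPSB : ∀ us : ℕ → X, (∃ M : ℝ, ∀ h, |f (us h)| ≤ M) →
      Filter.Tendsto (fun h => ‖fderiv ℝ f (us h)‖) Filter.atTop (nhds 0) →
      Filter.Tendsto (fun h => ‖ι (us h) - ι (sy (us h))‖) Filter.atTop (nhds 0) →
      ∃ M : ℝ, ∀ h, ‖us h‖ ≤ M) :
    ((⨅ w, f w : ℝ) : EReal) <
      Filter.liminf (fun u : X => (f u : EReal))
        (Filter.comap (fun u : X => ‖u‖) Filter.atTop) := by
  obtain ⟨Hs, hHs⟩ := happrox
  have hsyLip : ∀ u v, ‖ι (sy u) - ι (sy v)‖ ≤ CΘ * ‖ι u - ι v‖ := fun u v => by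
    rw [hsyext u, hsyext v]
    exact (norm_sub_sym_le_of_tendsto_foldl hpolS hpolContr Hs hHs (hΘS u) (hΘS v)).trans
      (hΘlip u v)
  have hsymm : ∀ u, ∀ ε > 0, ∃ v, f v ≤ f u ∧ ‖v‖ = ‖u‖ ∧ ‖ι v - ι (sy v)‖ < ε := by
    intro u ε hε
    obtain ⟨ξ, hξS, hξf, hξn⟩ := hfS u
    obtain ⟨v, hvf, hvn, hv⟩ := exists_norm_sub_sym_lt hpolS
      (fun u hu H => (hsypol u hu H).2.1) hfpol Hs hHs hξS hε
    exact ⟨v, hvf.trans hξf, hvn.trans hξn, hv⟩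
  by_contra! hflat
  obtain ⟨w, hfw, hderiv, hsym, hnorm⟩ := exists_tendsto_norm_atTop_of_liminf_le_iInf
    (hf.differentiable one_ne_zero) hfbdd hCΘ.le hsyLip hsymm hflat
  obtain ⟨M, hM⟩ := hPSB w hfw hderiv hsym
  obtain ⟨n, hn⟩ := (hnorm.eventually_gt_atTop M).exists
  exact (hM n).not_gt hn

theorem symmetric_PSB_implies_nonflat_at_infinity
    {X : Type*} [NormedAddCommGroup X] [NormedSpace ℝ X] [CompleteSpace X]
    {V : Type*} [NormedAddCommGroup V] [NormedSpace ℝ V] [CompleteSpace V]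
    {W : Type*} [NormedAddCommGroup W] [NormedSpace ℝ W] [CompleteSpace W]
    (ι : X →L[ℝ] V) (κ : V →L[ℝ] W)
    (K : ℝ) (hK : 0 < K) (hιK : ∀ u : X, ‖ι u‖ ≤ K * ‖u‖)
    (S : Set X)
    {P : Type*} [TopologicalSpace P] [PathConnectedSpace P]
    (pol : X → P → X) (sy : X → X)
    (hpolS : ∀ u ∈ S, ∀ H : P, pol u H ∈ S)
    (hsyS : ∀ u : X, sy u ∈ S)
    (hpolCont : ContinuousOn (fun q : X × P => pol q.1 q.2) (S ×ˢ Set.univ))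
    (hsypol : ∀ u ∈ S, ∀ H : P,
      pol (sy u) H = sy u ∧ sy (pol u H) = sy u ∧ pol (pol u H) H = pol u H)
    (happrox : ∃ Hs : ℕ → P, ∀ u ∈ S,
      Filter.Tendsto (fun m => ι (List.foldl pol u ((List.range m).map Hs)))
        Filter.atTop (nhds (ι (sy u))))
    (hpolContr : ∀ u ∈ S, ∀ v ∈ S, ∀ H : P, ‖ι (pol u H) - ι (pol v H)‖ ≤ ‖ι u - ι v‖)
    (Θ : X → X) (CΘ : ℝ) (hCΘ : 0 < CΘ)
    (hΘS : ∀ u : X, Θ u ∈ S) (hΘid : ∀ u ∈ S, Θ u = u)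
    (hΘlip : ∀ u v : X, ‖ι (Θ u) - ι (Θ v)‖ ≤ CΘ * ‖ι u - ι v‖)
    (hpolext : ∀ u : X, ∀ H : P, pol u H = pol (Θ u) H)
    (hsyext : ∀ u : X, sy u = sy (Θ u))
    (T : ℝ → X → X)
    (hTS : ∀ ρ > (0:ℝ), ∀ u ∈ S, T ρ u ∈ S)
    (hTpol : ∀ ρ > (0:ℝ), ∀ u ∈ S, ∃ l : List P, T ρ u = List.foldl pol u l)
    (hTsy : ∀ ρ > (0:ℝ), ∀ u ∈ S, sy (T ρ u) = sy u)
    (hTapprox : ∀ ρ > (0:ℝ), ∀ u ∈ S, ‖ι (T ρ u) - ι (sy u)‖ < ρ)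
    (f : X → ℝ) (hf : ContDiff ℝ 1 f) (hfbdd : BddBelow (Set.range f))
    (hfpol : ∀ u ∈ S, ∀ H : P, f (pol u H) ≤ f u ∧ ‖pol u H‖ = ‖u‖)
    (hfS : ∀ u : X, ∃ ξ ∈ S, f ξ ≤ f u ∧ ‖ξ‖ = ‖u‖)
    (hPSB : ∀ us : ℕ → X, (∃ M : ℝ, ∀ h, |f (us h)| ≤ M) →
      Filter.Tendsto (fun h => ‖fderiv ℝ f (us h)‖) Filter.atTop (nhds 0) →
      Filter.Tendsto (fun h => ‖ι (us h) - ι (sy (us h))‖) Filter.atTop (nhds 0) →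
      ∃ M : ℝ, ∀ h, ‖us h‖ ≤ M) :
    ((⨅ w, f w : ℝ) : EReal) <
      Filter.liminf (fun u : X => (f u : EReal))
        (Filter.comap (fun u : X => ‖u‖) Filter.atTop) :=
  symmetric_PSB_implies_nonflat_at_infinity_general ι S pol sy hpolS hsypol happrox hpolContr Θ CΘ
    hCΘ hΘS hΘlip hsyext f hf hfbdd hfpol hfS hPSB
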